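/- arXiv:1311.2859 — 2 statements merged into one kernel-verified Lean document; each statement's English description precedes it below -/
import Mathlib

section
/- Let f ∈ L¹(Ω) be nonnegative with all level sets {x ∈ Ω : f(x) = c} of Lebesgue measure zero, and let ρ̂ = c₁χ_{D̂₁} + ⋯ + c_m χ_{D̂_m} be the function built on the super-level sets of f: D̂₁ = {x ∈ Ω : f(x) ≥ t₁} with t₁ = sup{s : |{x ∈ Ω : f(x) ≥ s}| ≥ S₁}, and recursively D̂_i = {x ∈ Ω \ (D̂₁ ∪ ⋯ ∪ D̂_{i−1}) : f(x) ≥ t_i} with t_i = sup{s : |{x ∈ Ω \ (D̂₁ ∪ ⋯ ∪ D̂_{i−1}) : f(x) ≥ s}| ≥ S_i}. Then ρ̂ is the unique minimizer of ρ ↦ ∫_Ω ρ f dx over P: any ρ ∈ P with ∫_Ω ρ f dx = ∫_Ω ρ̂ f dx equals ρ̂ almost everywhere. -/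
/-!
Put `Λ(c_k) = ∑_{j<k} (c_{j+1} - c_j) t_j` and `L_x(y) = y f(x) - Λ(y)`. Since `ρ̂ ≥ c_{j+1}`
exactly where `f < t_j`, for a.e. `x` the value `ρ̂(x)` is the unique minimiser of `L_x` on
`{c_1, …, c_m}`: between consecutive levels `L_x` changes by `(c_{j+1} - c_j)(f(x) - t_j)`, which
is never `0` because the level sets of `f` are null. The thresholds make `|D̂_i| = S_i`, so every
`ρ ∈ P` has the distribution of `ρ̂`, hence `∫ Λ(ρ) = ∫ Λ(ρ̂)`. So `∫ ρ f = ∫ ρ̂ f` says that the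
nonnegative function `x ↦ L_x(ρ(x)) - L_x(ρ̂(x))` has integral `0`, i.e. `ρ = ρ̂` a.e.
-/

open MeasureTheory Set Function Filter Topology
open scoped ENNReal

section StepFunction

variable {α ι : Type*} [Fintype ι]

noncomputable def stepFunction (A : ι → Set α) (c : ι → ℝ) (x : α) : ℝ :=
  ∑ i, (A i).indicator (fun _ => c i) x

variable {A : ι → Set α} {c : ι → ℝ}

theorem stepFunction_eq_of_mem (hA : Pairwise (Disjoint on A)) {i : ι} {x : α} (hx : x ∈ A i) :
    stepFunction A c x = c i := by
  classical
  rw [stepFunction, Finset.sum_eq_single i (fun j _ hji => indicator_of_notMem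
    (disjoint_left.1 (hA hji.symm) hx) _) (by simp), indicator_of_mem hx]

variable [MeasurableSpace α]

theorem measurable_stepFunction (hA : ∀ i, MeasurableSet (A i)) :
    Measurable (stepFunction A c) :=
  Finset.measurable_sum _ fun i _ => measurable_const.indicator (hA i)

theorem map_restrict_stepFunction {μ : Measure α} {Ω : Set α} (hA : ∀ i, MeasurableSet (A i))
    (hdisj : Pairwise (Disjoint on A)) (hΩ : ⋃ i, A i = Ω) :
    (μ.restrict Ω).map (stepFunction A c) = ∑ i, μ (A i) • Measure.dirac (c i) := by
  have hconst : ∀ i, (μ.restrict (A i)).map (stepFunction A c) = μ (A i) • Measure.dirac (c i) :=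
    fun i => by
      rw [Measure.map_congr ((ae_restrict_iff' (hA i)).2 (ae_of_all _ fun x hx =>
        stepFunction_eq_of_mem hdisj hx)), Measure.map_const, Measure.restrict_apply_univ]
  rw [← hΩ, Measure.restrict_iUnion hdisj hA, Measure.map_sum
    (measurable_stepFunction hA).aemeasurable, Measure.sum_fintype]
  exact Finset.sum_congr rfl fun i _ => hconst i

end StepFunction

section Distribution

variable {α : Type*} [MeasurableSpace α] {μ : Measure α} {Ω : Set α}

theorem map_restrict_apply_Ici {g : α → ℝ} (hg : Measurable g) (r : ℝ) :
    (μ.restrict Ω).map g (Ici r) = μ {x ∈ Ω | r ≤ g x} := by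
  rw [Measure.map_apply hg measurableSet_Ici, Measure.restrict_apply (hg measurableSet_Ici),
    inter_comm]
  rfl

theorem map_restrict_eq_of_measure_superlevel_eq (hΩ : μ Ω ≠ ⊤) {g g' : α → ℝ} (hg : Measurable g)
    (hg' : Measurable g') (h : ∀ r, μ {x ∈ Ω | r ≤ g x} = μ {x ∈ Ω | r ≤ g' x}) :
    (μ.restrict Ω).map g = (μ.restrict Ω).map g' := by
  have : IsFiniteMeasure (μ.restrict Ω) := isFiniteMeasure_restrict.2 hΩ
  refine Measure.ext_of_Ici _ _ fun r => ?_
  rw [map_restrict_apply_Ici hg, map_restrict_apply_Ici hg', h]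

theorem bddAbove_setOf_le_measure_Ici (ν : Measure ℝ) [IsFiniteMeasure ν] {s : ℝ≥0∞}
    (hs : s ≠ 0) : BddAbove {a | s ≤ ν (Ici a)} := by
  have hanti : Antitone fun k : ℕ => Ici (k : ℝ) := fun k l h => Ici_subset_Ici.2 (Nat.cast_le.2 h)
  have hempty : ⋂ k : ℕ, Ici (k : ℝ) = ∅ := eq_empty_iff_forall_notMem.2 fun x hx =>
    let ⟨k, hk⟩ := exists_nat_gt x
    (mem_iInter.1 hx k).not_gt hk
  have h0 : ⨅ k : ℕ, ν (Ici (k : ℝ)) < s := by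
    rw [← hanti.measure_iInter (fun _ => measurableSet_Ici.nullMeasurableSet)
      ⟨0, measure_ne_top _ _⟩, hempty, measure_empty]
    exact pos_iff_ne_zero.2 hs
  obtain ⟨k, hk⟩ := iInf_lt_iff.1 h0
  exact ⟨k, fun a ha => le_of_not_gt fun hka =>
    (le_trans ha (measure_mono (Ici_subset_Ici.2 hka.le))).not_gt hk⟩

theorem measure_Ici_sSup_eq (ν : Measure ℝ) [IsFiniteMeasure ν] [NullSingletonClass ν]
    {s : ℝ≥0∞} (hs : s ≠ 0) (hne : ∃ a, s ≤ ν (Ici a)) :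
    ν (Ici (sSup {a | s ≤ ν (Ici a)})) = s := by
  set A := {a | s ≤ ν (Ici a)}
  have hbdd := bddAbove_setOf_le_measure_Ici ν hs
  set τ := sSup A
  have hε : Tendsto (fun k : ℕ => 1 / ((k : ℝ) + 1)) atTop (𝓝 0) :=
    tendsto_one_div_add_atTop_nhds_zero_nat
  have hε_pos : ∀ k : ℕ, 0 < 1 / ((k : ℝ) + 1) := fun k => by positivity
  apply le_antisymm
  · have hunion : ⋃ k : ℕ, Ici (τ + 1 / ((k : ℝ) + 1)) = Ioi τ :=
      iUnion_Ici_eq_Ioi_of_lt_of_tendsto (fun k => lt_add_of_pos_right τ (hε_pos k))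
        (by simpa using tendsto_const_nhds.add hε)
    have hmono : Monotone fun k : ℕ => Ici (τ + 1 / ((k : ℝ) + 1)) :=
      fun k l hkl => Ici_subset_Ici.2 (by gcongr)
    rw [measure_congr Ioi_ae_eq_Ici.symm, ← hunion, hmono.measure_iUnion]
    exact iSup_le fun k => le_of_not_gt fun h =>
      (le_csSup hbdd (show τ + 1 / ((k : ℝ) + 1) ∈ A from h.le)).not_gt
        (lt_add_of_pos_right τ (hε_pos k))
  · have hinter : ⋂ k : ℕ, Ici (τ - 1 / ((k : ℝ) + 1)) = Ici τ := by
      ext x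
      simp only [mem_iInter, mem_Ici]
      refine ⟨fun h => le_of_tendsto' (by simpa using tendsto_const_nhds.sub hε) h,
        fun h k => (sub_le_self τ (hε_pos k).le).trans h⟩
    have hanti : Antitone fun k : ℕ => Ici (τ - 1 / ((k : ℝ) + 1)) :=
      fun k l hkl => Ici_subset_Ici.2 (by gcongr)
    rw [← hinter, hanti.measure_iInter (fun _ => measurableSet_Ici.nullMeasurableSet)
      ⟨0, measure_ne_top _ _⟩]
    refine le_iInf fun k => ?_
    obtain ⟨b, hb, hkb⟩ := exists_lt_of_lt_csSup hne (sub_lt_self τ (hε_pos k))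
    exact le_trans hb (measure_mono (Ici_subset_Ici.2 hkb.le))

theorem measure_superlevel_sSup_eq {R : Set α} (hR : μ R ≠ ∞) {f : α → ℝ} (hf : Measurable f)
    (hf_nonneg : ∀ x ∈ R, 0 ≤ f x) (hlevel : ∀ a, μ {x ∈ R | f x = a} = 0) {s : ℝ≥0∞}
    (hs : s ≠ 0) (hsR : s ≤ μ R) :
    μ {x ∈ R | sSup {a : ℝ | s ≤ μ {x ∈ R | a ≤ f x}} ≤ f x} = s := by
  have : IsFiniteMeasure (μ.restrict R) := isFiniteMeasure_restrict.2 hR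
  have : NullSingletonClass ((μ.restrict R).map f) := ⟨fun a => by
    rw [Measure.map_apply hf (measurableSet_singleton a),
      Measure.restrict_apply (hf (measurableSet_singleton a)), inter_comm]
    exact hlevel a⟩
  have hR0 : s ≤ (μ.restrict R).map f (Ici 0) := by
    rw [map_restrict_apply_Ici hf]
    exact hsR.trans (measure_mono fun x hx => ⟨hx, hf_nonneg x hx⟩)
  simpa only [map_restrict_apply_Ici hf] using measure_Ici_sSup_eq _ hs ⟨0, hR0⟩

end Distribution

section GreedyPartition

variable {α : Type*} {m : ℕ} {Ω : Set α} {A : Fin m → Set α}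

def remainder (Ω : Set α) (A : Fin m → Set α) (i : Fin m) : Set α :=
  Ω \ ⋃ j, ⋃ (_ : j < i), A j

theorem remainder_subset (i : Fin m) : remainder Ω A i ⊆ Ω := sdiff_subset

theorem remainder_anti {i j : Fin m} (hij : i ≤ j) : remainder Ω A j ⊆ remainder Ω A i :=
  sdiff_subset_sdiff_right <| iUnion₂_mono' fun k hk => ⟨k, hk.trans_le hij, subset_rfl⟩

theorem notMem_of_mem_remainder {i j : Fin m} {x : α} (hx : x ∈ remainder Ω A i) (hji : j < i) :
    x ∉ A j :=
  fun hxj => hx.2 (mem_iUnion₂.2 ⟨j, hji, hxj⟩)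

variable [MeasurableSpace α]

theorem measurableSet_remainder (hΩ : MeasurableSet Ω) {i : Fin m}
    (hA : ∀ j < i, MeasurableSet (A j)) : MeasurableSet (remainder Ω A i) :=
  hΩ.diff (.iUnion fun j => .iUnion fun hj => hA j hj)

theorem measure_remainder_add_sum {μ : Measure α} {i : Fin m} (hAΩ : ∀ j, A j ⊆ Ω)
    (hdisj : Pairwise (Disjoint on A)) (hA : ∀ j < i, MeasurableSet (A j)) :
    μ (remainder Ω A i) + ∑ j with j < i, μ (A j) = μ Ω := by
  have hU : ⋃ j, ⋃ (_ : j < i), A j = ⋃ j ∈ Finset.univ.filter (· < i), A j := by simp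
  have hUΩ : Ω ∩ ⋃ j, ⋃ (_ : j < i), A j = ⋃ j, ⋃ (_ : j < i), A j :=
    inter_eq_right.2 (iUnion₂_subset fun j _ => hAΩ j)
  rw [← measure_sdiff_add_inter Ω (.iUnion fun j => .iUnion fun hj => hA j hj), hUΩ]
  congr 1
  rw [hU, measure_biUnion_finset (fun j _ k _ hjk => hdisj hjk)
    (fun j hj => hA j (by simpa using hj))]

/-- `A` is the partition `D̂` of the paper with thresholds `t`, indexed from `0`:
`A i = D̂_{i+1}` and `t i = t_{i+1}`. -/
structure IsGreedyPartition (μ : Measure α) (Ω : Set α) (f : α → ℝ) (S t : Fin m → ℝ)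
    (A : Fin m → Set α) : Prop where
  threshold_eq : ∀ i : Fin m, (i : ℕ) < m - 1 →
    t i = sSup {s : ℝ | ENNReal.ofReal (S i) ≤ μ {x ∈ remainder Ω A i | s ≤ f x}}
  eq_superlevel : ∀ i : Fin m, (i : ℕ) < m - 1 → A i = {x ∈ remainder Ω A i | t i ≤ f x}
  eq_remainder : ∀ i : Fin m, (i : ℕ) = m - 1 → A i = remainder Ω A i

namespace IsGreedyPartition

variable {μ : Measure α} {f : α → ℝ} {S t : Fin m → ℝ}

theorem subset_remainder (hA : IsGreedyPartition μ Ω f S t A) (i : Fin m) :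
    A i ⊆ remainder Ω A i := by
  by_cases hi : (i : ℕ) < m - 1
  · rw [hA.eq_superlevel i hi]
    exact sep_subset _ _
  · rw [hA.eq_remainder i (by omega)]

theorem subset (hA : IsGreedyPartition μ Ω f S t A) (i : Fin m) : A i ⊆ Ω :=
  (hA.subset_remainder i).trans (remainder_subset i)

theorem pairwise_disjoint (hA : IsGreedyPartition μ Ω f S t A) : Pairwise (Disjoint on A) := by
  intro i j hij
  rcases hij.lt_or_gt with h | h
  · exact disjoint_right.2 fun x hx => notMem_of_mem_remainder (hA.subset_remainder j hx) h
  · exact disjoint_left.2 fun x hx => notMem_of_mem_remainder (hA.subset_remainder i hx) h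

theorem iUnion_eq (hA : IsGreedyPartition μ Ω f S t A) (hm : 0 < m) : ⋃ i, A i = Ω := by
  refine (iUnion_subset hA.subset).antisymm fun x hx => ?_
  by_contra hxA
  have hlast : x ∈ remainder Ω A ⟨m - 1, by omega⟩ :=
    ⟨hx, fun hx' => hxA <| by
      obtain ⟨j, -, hj⟩ := mem_iUnion₂.1 hx'
      exact mem_iUnion.2 ⟨j, hj⟩⟩
  exact hxA (mem_iUnion.2 ⟨_, (hA.eq_remainder ⟨m - 1, by omega⟩ rfl).symm ▸ hlast⟩)

theorem measurableSet (hA : IsGreedyPartition μ Ω f S t A) (hΩ : MeasurableSet Ω)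
    (hf : Measurable f) (i : Fin m) : MeasurableSet (A i) := by
  induction i using WellFoundedLT.induction with
  | _ i ih =>
    have hrem := measurableSet_remainder hΩ ih
    by_cases hi : (i : ℕ) < m - 1
    · rw [hA.eq_superlevel i hi]
      exact hrem.inter (measurableSet_le measurable_const hf)
    · rwa [hA.eq_remainder i (by omega)]

theorem measure_remainder_eq (hA : IsGreedyPartition μ Ω f S t A) (hΩ : MeasurableSet Ω)
    (hf : Measurable f) (hvol : μ Ω = ∑ i, ENNReal.ofReal (S i)) {i : Fin m}
    (hlt : ∀ j < i, μ (A j) = ENNReal.ofReal (S j)) :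
    μ (remainder Ω A i) = ∑ j with ¬ j < i, ENNReal.ofReal (S j) := by
  have h := measure_remainder_add_sum (μ := μ) (i := i) hA.subset hA.pairwise_disjoint
    fun j _ => hA.measurableSet hΩ hf j
  rw [Finset.sum_congr rfl fun j hj => hlt j (Finset.mem_filter.1 hj).2, hvol,
    ← Finset.sum_filter_add_sum_filter_not Finset.univ (· < i), add_comm (∑ j with j < i, _)] at h
  exact (ENNReal.add_left_inj (ENNReal.sum_ne_top.2 fun _ _ => ENNReal.ofReal_ne_top)).1 h

theorem measure_eq (hA : IsGreedyPartition μ Ω f S t A) (hΩ : MeasurableSet Ω) (hΩfin : μ Ω ≠ ∞)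
    (hf : Measurable f) (hf_nonneg : ∀ x ∈ Ω, 0 ≤ f x) (hlevel : ∀ a, μ {x ∈ Ω | f x = a} = 0)
    (hS : ∀ i, 0 < S i) (hvol : μ Ω = ∑ i, ENNReal.ofReal (S i)) (i : Fin m) :
    μ (A i) = ENNReal.ofReal (S i) := by
  induction i using WellFoundedLT.induction with
  | _ i ih =>
    have hrem := hA.measure_remainder_eq hΩ hf hvol ih
    by_cases hi : (i : ℕ) < m - 1
    · rw [hA.eq_superlevel i hi, hA.threshold_eq i hi]
      refine measure_superlevel_sSup_eq (measure_ne_top_of_subset (remainder_subset i) hΩfin) hf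
        (fun x hx => hf_nonneg x (remainder_subset i hx))
        (fun a => measure_mono_null (t := {x ∈ Ω | f x = a})
          (fun x hx => ⟨remainder_subset i hx.1, hx.2⟩) (hlevel a))
        (ENNReal.ofReal_pos.2 (hS i)).ne' ?_
      rw [hrem]
      exact Finset.single_le_sum (f := fun j => ENNReal.ofReal (S j)) (fun _ _ => zero_le)
        (by simp)
    · rw [hA.eq_remainder i (by omega), hrem]
      refine Finset.sum_eq_single_of_mem i (by simp) fun j hj hji => absurd j.isLt ?_
      have hij := Fin.lt_def.1 (lt_of_le_of_ne (not_lt.1 (Finset.mem_filter.1 hj).2) hji.symm)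
      omega

theorem lt_threshold_of_lt (hA : IsGreedyPartition μ Ω f S t A) {x : α} {j k : Fin m}
    (hx : x ∈ A k) (hj : (j : ℕ) < m - 1) (hjk : j < k) : f x < t j := by
  have hxj : x ∈ remainder Ω A j := remainder_anti hjk.le (hA.subset_remainder k hx)
  have hxA : x ∉ A j := notMem_of_mem_remainder (hA.subset_remainder k hx) hjk
  rw [hA.eq_superlevel j hj] at hxA
  exact lt_of_not_ge fun h => hxA ⟨hxj, h⟩

theorem threshold_le_of_le (hA : IsGreedyPartition μ Ω f S t A) {x : α} {j k : Fin m}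
    (hne : (A j).Nonempty) (hx : x ∈ A k) (hj : (j : ℕ) < m - 1) (hkj : k ≤ j) : t j ≤ f x := by
  have hsuper : ∀ {y i}, y ∈ A i → (i : ℕ) < m - 1 → t i ≤ f y :=
    fun hy hi => (hA.eq_superlevel _ hi ▸ hy).2
  rcases hkj.eq_or_lt with rfl | hlt
  · exact hsuper hx hj
  · have hk : (k : ℕ) < m - 1 := (Fin.lt_def.1 hlt).trans hj
    obtain ⟨y, hy⟩ := hne
    exact ((hsuper hy hj).trans (hA.lt_threshold_of_lt hy hk hlt).le).trans (hsuper hx hk)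

theorem lt_threshold_iff (hA : IsGreedyPartition μ Ω f S t A) {x : α} {j k : Fin m}
    (hne : (A j).Nonempty) (hx : x ∈ A k) (hj : (j : ℕ) < m - 1) : f x < t j ↔ j < k :=
  ⟨fun h => lt_of_not_ge fun hkj => (hA.threshold_le_of_le hne hx hj hkj).not_gt h,
    hA.lt_threshold_of_lt hx hj⟩

end IsGreedyPartition

end GreedyPartition

section Layers

variable {n : ℕ} {c : Fin (n + 1) → ℝ}

/-- `layerSum c g (c k) = ∑_{j < k} (c_{j+1} - c_j) g_j`. -/
noncomputable def layerSum (c : Fin (n + 1) → ℝ) (g : Fin n → ℝ) (y : ℝ) : ℝ :=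
  ∑ j, (c j.succ - c j.castSucc) * g j * (Ici (c j.succ)).indicator 1 y

theorem indicator_Ici_apply_of_strictMono (hc : StrictMono c) (a b : Fin (n + 1)) :
    (Ici (c a)).indicator (1 : ℝ → ℝ) (c b) = if a ≤ b then 1 else 0 := by
  simp only [indicator, mem_Ici, hc.le_iff_le, Pi.one_apply]

theorem eq_add_layerSum_one (hc : StrictMono c) (k : Fin (n + 1)) :
    c k = c 0 + layerSum c 1 (c k) := by
  simp only [layerSum, Pi.one_apply, mul_one, indicator_Ici_apply_of_strictMono hc]
  induction k using Fin.induction with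
  | zero => simp [Fin.succ_ne_zero]
  | succ i ih =>
    have hstep : ∀ j : Fin n, (if j.succ ≤ i.succ then (1 : ℝ) else 0) =
        (if j.succ ≤ i.castSucc then 1 else 0) + if j = i then 1 else 0 := by
      intro j
      rcases lt_trichotomy j i with h | rfl | h
      · simp [h.ne, Fin.succ_le_castSucc_iff.2 h, h.le]
      · simp
      · simp [h.ne', Fin.succ_le_castSucc_iff, h.not_gt, h.not_ge]
    have hlast : ∑ j : Fin n, (c j.succ - c j.castSucc) * (if j = i then 1 else 0) =
        c i.succ - c i.castSucc := by simp
    simp only [hstep, mul_add, Finset.sum_add_distrib, hlast]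
    linarith

theorem mul_sub_layerSum_sub_eq (hc : StrictMono c) (τ : Fin n → ℝ) (v : ℝ) (a b : Fin (n + 1)) :
    (c a * v - layerSum c τ (c a)) - (c b * v - layerSum c τ (c b)) =
      ∑ j, (c j.succ - c j.castSucc) * (((Ici (c j.succ)).indicator 1 (c a) -
        (Ici (c j.succ)).indicator 1 (c b)) * (v - τ j)) := by
  have hdiff : c a - c b = layerSum c 1 (c a) - layerSum c 1 (c b) := by
    linarith [eq_add_layerSum_one hc a, eq_add_layerSum_one hc b]
  calc _ = (c a - c b) * v - (layerSum c τ (c a) - layerSum c τ (c b)) := by ring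
    _ = _ := by
      simp only [hdiff, layerSum, Pi.one_apply, ← Finset.sum_sub_distrib, Finset.sum_mul]
      exact Finset.sum_congr rfl fun j _ => by ring

theorem mul_sub_layerSum_lt_of_ne (hc : StrictMono c) {τ : Fin n → ℝ} {v : ℝ}
    (hv : ∀ j, v ≠ τ j) {k : Fin (n + 1)} (hk : ∀ j, c j.succ ≤ c k ↔ v < τ j)
    {i : Fin (n + 1)} (hik : i ≠ k) :
    c k * v - layerSum c τ (c k) < c i * v - layerSum c τ (c i) := by
  set I : Fin n → ℝ → ℝ := fun j => (Ici (c j.succ)).indicator 1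
  have hterm : ∀ j, 0 ≤ (I j (c i) - I j (c k)) * (v - τ j) ∧
      (I j (c i) ≠ I j (c k) → 0 < (I j (c i) - I j (c k)) * (v - τ j)) := by
    intro j
    simp only [I, indicator, mem_Ici, Pi.one_apply, hk j]
    rcases (hv j).lt_or_gt with h | h <;> split_ifs <;> simp_all <;> linarith
  obtain ⟨j, hj⟩ : ∃ j, I j (c i) ≠ I j (c k) := by
    by_contra! h
    refine hik (hc.injective ?_)
    rw [eq_add_layerSum_one hc i, eq_add_layerSum_one hc k]
    simp only [layerSum, Pi.one_apply, mul_one]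
    exact congrArg _ (Finset.sum_congr rfl fun j _ => congrArg _ (h j))
  have hw : ∀ j : Fin n, 0 < c j.succ - c j.castSucc := fun j => sub_pos.2 (hc j.castSucc_lt_succ)
  have hpos := Finset.sum_pos' (fun j _ => mul_nonneg (hw j).le (hterm j).1)
    ⟨j, Finset.mem_univ _, mul_pos (hw j) ((hterm j).2 hj)⟩
  linarith [mul_sub_layerSum_sub_eq hc τ v i k]

theorem measurable_layerSum {g : Fin n → ℝ} : Measurable (layerSum c g) :=
  Finset.measurable_sum _ fun _ _ =>
    measurable_const.mul (measurable_one.indicator measurableSet_Ici)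

end Layers

section Lagrangian

variable {α : Type*} [MeasurableSpace α] {μ : Measure α}

theorem integrable_mul_and_comp_of_ae_mem_finite [IsFiniteMeasure μ] {V : Set ℝ}
    (hV : V.Finite) {g f : α → ℝ} (hg : Measurable g) (hgV : ∀ᵐ x ∂μ, g x ∈ V)
    (hf : Integrable f μ) {Λ : ℝ → ℝ} (hΛ : Measurable Λ) :
    Integrable (fun x => g x * f x) μ ∧ Integrable (fun x => Λ (g x)) μ := by
  obtain ⟨C, hC⟩ := (hV.image fun y => ‖y‖).bddAbove
  obtain ⟨C', hC'⟩ := (hV.image fun y => ‖Λ y‖).bddAbove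
  exact ⟨hf.bdd_mul hg.aestronglyMeasurable (hgV.mono fun x hx => hC (mem_image_of_mem _ hx)),
    .of_bound (hΛ.comp hg).aestronglyMeasurable C'
      (hgV.mono fun x hx => hC' (mem_image_of_mem _ hx))⟩

theorem integral_comp_eq_of_map_eq {g g' : α → ℝ} (hg : Measurable g) (hg' : Measurable g')
    (hmap : μ.map g = μ.map g') {Λ : ℝ → ℝ} (hΛ : Measurable Λ) :
    ∫ x, Λ (g x) ∂μ = ∫ x, Λ (g' x) ∂μ := by
  rw [← integral_map hg.aemeasurable hΛ.aestronglyMeasurable, hmap,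
    integral_map hg'.aemeasurable hΛ.aestronglyMeasurable]

theorem ae_eq_of_integral_eq_of_forall_lt {β : Type*} {L : α → β → ℝ} {ρ ρ' : α → β}
    {V : Set β} (hρ : ∀ᵐ x ∂μ, ρ x ∈ V)
    (hmin : ∀ᵐ x ∂μ, ∀ y ∈ V, y ≠ ρ' x → L x (ρ' x) < L x y)
    (hi : Integrable (fun x => L x (ρ x)) μ) (hi' : Integrable (fun x => L x (ρ' x)) μ)
    (heq : ∫ x, L x (ρ x) ∂μ = ∫ x, L x (ρ' x) ∂μ) : ρ =ᵐ[μ] ρ' := by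
  have hgap : ∀ᵐ x ∂μ, L x (ρ' x) ≤ L x (ρ x) := by
    filter_upwards [hρ, hmin] with x hx hxmin
    by_cases h : ρ x = ρ' x
    · rw [h]
    · exact (hxmin _ hx h).le
  have hzero := (integral_eq_zero_iff_of_nonneg_ae (hgap.mono fun x hx => sub_nonneg.2 hx)
    (hi.sub hi')).1 (by rw [integral_sub hi hi', heq, sub_self])
  filter_upwards [hρ, hmin, hzero] with x hx hxmin hx0
  by_contra h
  exact (hxmin _ hx h).ne' (sub_eq_zero.1 hx0)

theorem ae_eq_of_map_eq_of_integral_mul_eq [IsFiniteMeasure μ] {n : ℕ} {c : Fin (n + 1) → ℝ}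
    (hc : StrictMono c) (τ : Fin n → ℝ) {f ρ ρ' : α → ℝ} (hf : Integrable f μ)
    (hρ : Measurable ρ) (hρ' : Measurable ρ') (hmap : μ.map ρ = μ.map ρ')
    (hρ'c : ∀ᵐ x ∂μ, ∃ k, ρ' x = c k ∧ ∀ j, c j.succ ≤ c k ↔ f x < τ j)
    (hτ : ∀ᵐ x ∂μ, ∀ j, f x ≠ τ j) (heq : ∫ x, ρ x * f x ∂μ = ∫ x, ρ' x * f x ∂μ) :
    ρ =ᵐ[μ] ρ' := by
  have hρ'_range : ∀ᵐ x ∂μ, ρ' x ∈ range c := hρ'c.mono fun x ⟨k, hk, _⟩ => ⟨k, hk.symm⟩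
  have hρ_range : ∀ᵐ x ∂μ, ρ x ∈ range c := by
    refine ae_of_ae_map hρ.aemeasurable ?_
    rw [hmap]
    exact (ae_map_iff hρ'.aemeasurable (finite_range c).measurableSet).2 hρ'_range
  have hΛ : Measurable (layerSum c τ) := measurable_layerSum
  obtain ⟨hi₁, hi₂⟩ :=
    integrable_mul_and_comp_of_ae_mem_finite (finite_range c) hρ hρ_range hf hΛ
  obtain ⟨hi₁', hi₂'⟩ :=
    integrable_mul_and_comp_of_ae_mem_finite (finite_range c) hρ' hρ'_range hf hΛ
  refine ae_eq_of_integral_eq_of_forall_lt (L := fun x y => y * f x - layerSum c τ y) hρ_range ?_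
    (hi₁.sub hi₂) (hi₁'.sub hi₂') ?_
  · filter_upwards [hρ'c, hτ] with x ⟨k, hk, hkf⟩ hxτ
    rw [hk]
    rintro _ ⟨i, rfl⟩ hik
    exact mul_sub_layerSum_lt_of_ne hc hxτ hkf fun h => hik (h ▸ rfl)
  · rw [integral_sub hi₁ hi₂, integral_sub hi₁' hi₂', heq,
      integral_comp_eq_of_map_eq hρ hρ' hmap hΛ]

end Lagrangian

theorem stmt6_general {N m : ℕ} (hm : 0 < m)
    (Ω : Set (EuclideanSpace ℝ (Fin N)))
    (hΩ_meas : MeasurableSet Ω) (hΩ_bd : Bornology.IsBounded Ω)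
    (c : Fin m → ℝ) (hc_mono : StrictMono c)
    (S : Fin m → ℝ) (hS_pos : ∀ i, 0 < S i)
    (D : Fin m → Set (EuclideanSpace ℝ (Fin N)))
    (hD_meas : ∀ i, MeasurableSet (D i))
    (hD_disj : Pairwise (Function.onFun Disjoint D))
    (hD_union : (⋃ i, D i) = Ω)
    (hD_vol : ∀ i, volume (D i) = ENNReal.ofReal (S i))
    (f : EuclideanSpace ℝ (Fin N) → ℝ) (hf_meas : Measurable f)
    (hf_int : IntegrableOn f Ω) (hf_nonneg : ∀ x ∈ Ω, 0 ≤ f x)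
    (hf_level : ∀ a : ℝ, volume {x ∈ Ω | f x = a} = 0)
    (t : Fin m → ℝ) (Dhat : Fin m → Set (EuclideanSpace ℝ (Fin N)))
    (ht : ∀ i : Fin m, (i : ℕ) < m - 1 →
      t i = sSup {s : ℝ |
        ENNReal.ofReal (S i) ≤
          volume {x ∈ Ω \ ⋃ j, ⋃ (_ : j < i), Dhat j | s ≤ f x}})
    (hDhat : ∀ i : Fin m, (i : ℕ) < m - 1 →
      Dhat i = {x ∈ Ω \ ⋃ j, ⋃ (_ : j < i), Dhat j | t i ≤ f x})
    (hDlast : ∀ i : Fin m, (i : ℕ) = m - 1 →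
      Dhat i = Ω \ ⋃ j, ⋃ (_ : j < i), Dhat j) :
    ∀ ρ : EuclideanSpace ℝ (Fin N) → ℝ, Measurable ρ →
      (∀ r : ℝ, volume {x ∈ Ω | r ≤ ρ x} =
        volume {x ∈ Ω | r ≤ ∑ i, (D i).indicator (fun _ => c i) x}) →
      (∫ x in Ω, ρ x * f x) =
        ∫ x in Ω, (∑ i, (Dhat i).indicator (fun _ => c i) x) * f x →
      ρ =ᵐ[volume.restrict Ω] fun x => ∑ i, (Dhat i).indicator (fun _ => c i) x := by
  intro ρ hρ hdist hint
  obtain ⟨n, rfl⟩ : ∃ n, m = n + 1 := ⟨m - 1, by omega⟩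
  have hΩfin : volume Ω ≠ ⊤ := hΩ_bd.measure_lt_top.ne
  have : IsFiniteMeasure (volume.restrict Ω) := isFiniteMeasure_restrict.2 hΩfin
  have hA : IsGreedyPartition volume Ω f S t Dhat := ⟨ht, hDhat, hDlast⟩
  have hvol : volume Ω = ∑ i, ENNReal.ofReal (S i) := by
    rw [← hD_union, measure_iUnion hD_disj hD_meas, tsum_fintype]
    exact Finset.sum_congr rfl fun i _ => hD_vol i
  have hAvol := hA.measure_eq hΩ_meas hΩfin hf_meas hf_nonneg hf_level hS_pos hvol
  have hAmeas := hA.measurableSet hΩ_meas hf_meas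
  have hAunion := hA.iUnion_eq n.succ_pos
  have hne : ∀ i, (Dhat i).Nonempty := fun i => nonempty_of_measure_ne_zero
    (by rw [hAvol]; exact (ENNReal.ofReal_pos.2 (hS_pos i)).ne')
  have hmap : (volume.restrict Ω).map ρ = (volume.restrict Ω).map (stepFunction Dhat c) := by
    rw [map_restrict_eq_of_measure_superlevel_eq hΩfin hρ (measurable_stepFunction hD_meas) hdist,
      map_restrict_stepFunction hD_meas hD_disj hD_union,
      map_restrict_stepFunction hAmeas hA.pairwise_disjoint hAunion]
    simp only [hD_vol, hAvol]
  refine ae_eq_of_map_eq_of_integral_mul_eq hc_mono (fun j => t j.castSucc) hf_int hρ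
    (measurable_stepFunction hAmeas) hmap ?_ ?_ hint
  · filter_upwards [ae_restrict_mem hΩ_meas] with x hx
    obtain ⟨k, hk⟩ := mem_iUnion.1 (hAunion ▸ hx : x ∈ ⋃ i, Dhat i)
    refine ⟨k, stepFunction_eq_of_mem hA.pairwise_disjoint hk, fun j => ?_⟩
    rw [hc_mono.le_iff_le, ← Fin.castSucc_lt_iff_succ_le, hA.lt_threshold_iff (hne _) hk (by simp)]
  · refine ae_all_iff.2 fun j => (ae_restrict_iff' hΩ_meas).2 (ae_iff.2 ?_)
    simpa using hf_level (t j.castSucc)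

/-- uniqueness of the minimizer built on super-level sets.
Let `f ∈ L¹(Ω)` be nonnegative with all its level sets of measure zero, and let
`ρ̂ = ∑ i, c i • χ_{D̂ i}` be the step function built on the super-level sets of `f`
(thresholds `t i = sup {s | |{x ∈ Ω \ (D̂ 0 ∪ ⋯ ∪ D̂ (i-1)) : f x ≥ s}| ≥ S i}`,
`D̂ i = {x ∈ Ω \ (D̂ 0 ∪ ⋯ ∪ D̂ (i-1)) : f x ≥ t i}`, last set the remainder).
Then `ρ̂` is the unique minimizer of `ρ ↦ ∫_Ω ρ f` over the rearrangement class `P`: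
any `ρ ∈ P` achieving the same integral equals `ρ̂` a.e. on `Ω`. -/
theorem stmt6 {N m : ℕ} (hm : 0 < m)
    (Ω : Set (EuclideanSpace ℝ (Fin N)))
    (hΩ_meas : MeasurableSet Ω) (hΩ_bd : Bornology.IsBounded Ω)
    (c : Fin m → ℝ) (hc_pos : ∀ i, 0 < c i) (hc_mono : StrictMono c)
    (S : Fin m → ℝ) (hS_pos : ∀ i, 0 < S i)
    (D : Fin m → Set (EuclideanSpace ℝ (Fin N)))
    (hD_meas : ∀ i, MeasurableSet (D i))
    (hD_disj : Pairwise (Function.onFun Disjoint D))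
    (hD_union : (⋃ i, D i) = Ω)
    (hD_vol : ∀ i, volume (D i) = ENNReal.ofReal (S i))
    (f : EuclideanSpace ℝ (Fin N) → ℝ) (hf_meas : Measurable f)
    (hf_int : IntegrableOn f Ω) (hf_nonneg : ∀ x ∈ Ω, 0 ≤ f x)
    (hf_level : ∀ a : ℝ, volume {x ∈ Ω | f x = a} = 0)
    (t : Fin m → ℝ) (Dhat : Fin m → Set (EuclideanSpace ℝ (Fin N)))
    (ht : ∀ i : Fin m, (i : ℕ) < m - 1 →
      t i = sSup {s : ℝ |
        ENNReal.ofReal (S i) ≤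
          volume {x ∈ Ω \ ⋃ j, ⋃ (_ : j < i), Dhat j | s ≤ f x}})
    (hDhat : ∀ i : Fin m, (i : ℕ) < m - 1 →
      Dhat i = {x ∈ Ω \ ⋃ j, ⋃ (_ : j < i), Dhat j | t i ≤ f x})
    (hDlast : ∀ i : Fin m, (i : ℕ) = m - 1 →
      Dhat i = Ω \ ⋃ j, ⋃ (_ : j < i), Dhat j) :
    ∀ ρ : EuclideanSpace ℝ (Fin N) → ℝ, Measurable ρ →
      (∀ r : ℝ, volume {x ∈ Ω | r ≤ ρ x} =
        volume {x ∈ Ω | r ≤ ∑ i, (D i).indicator (fun _ => c i) x}) →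
      (∫ x in Ω, ρ x * f x) =
        ∫ x in Ω, (∑ i, (Dhat i).indicator (fun _ => c i) x) * f x →
      ρ =ᵐ[volume.restrict Ω] fun x => ∑ i, (Dhat i).indicator (fun _ => c i) x :=
  stmt6_general hm Ω hΩ_meas hΩ_bd c hc_mono S hS_pos D hD_meas hD_disj hD_union hD_vol f hf_meas
    hf_int hf_nonneg hf_level t Dhat ht hDhat hDlast
end

section
/- Let ρ₀ ∈ P and let f ∈ L¹(Ω) be nonnegative with all level sets {x ∈ Ω : f(x) = c} of Lebesgue measure zero. Then there exists ρ₁ ∈ P such that ∫_Ω ρ₀ f dx ≤ ∫_Ω ρ₁ f dx, and moreover ρ₁ can be taken of the form c₁χ_{D̂₁} + ⋯ + c_m χ_{D̂_m} where D̂₁, …, D̂_m are pairwise disjoint measurable sets obtained from the sub-level sets of f, with |D̂_i| = S_i and ⋃_{i=1}^m D̂_i = Ω. -/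
/-!
Because the level sets of `f` are null, `t ↦ |{x ∈ Ω | f x < t}|` is continuous, so by the
intermediate value theorem `Ω` can be cut along sublevel sets of `f` into consecutive slabs
`D̂ᵢ` with `|D̂ᵢ| = |Dᵢ|`. The step function `ρ₁ = ∑ cᵢ χ_{D̂ᵢ}` is then a rearrangement of `ρ₀`
whose superlevel sets are superlevel sets of `f`. By the layer-cake formula for the measure
`f dx`, `∫_Ω ρ f = ∫₀^∞ (∫_{ρ ≥ t} f) dt`, and for each `t` the bathtub principle says that among
sets of the same measure, a superlevel set of `f` carries the largest `f`-mass.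
-/

open MeasureTheory Set Filter Topology
open scoped ENNReal

section StepFunction

variable {α ι : Type*} [Fintype ι] {E : ι → Set α} {Ω : Set α}

theorem sum_indicator_apply_of_mem {β : Type*} [AddCommMonoid β]
    (hE : Pairwise (Function.onFun Disjoint E)) (c : ι → β) {i : ι} {x : α} (hx : x ∈ E i) :
    ∑ j, (E j).indicator (fun _ ↦ c j) x = c i := by
  rw [Finset.sum_eq_single_of_mem i (Finset.mem_univ i) fun j _ hji ↦
    indicator_of_notMem (fun hxj ↦ (hE hji).notMem_of_mem_left hxj hx) _]
  exact indicator_of_mem hx _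

theorem sep_le_sum_indicator (hE : Pairwise (Function.onFun Disjoint E)) (hU : ⋃ i, E i = Ω)
    (c : ι → ℝ) (r : ℝ) :
    {x ∈ Ω | r ≤ ∑ i, (E i).indicator (fun _ ↦ c i) x} =
      ⋃ i ∈ Finset.univ.filter (r ≤ c ·), E i := by
  ext x
  simp only [mem_ofPred_eq, mem_iUnion, Finset.mem_filter, Finset.mem_univ, true_and,
    exists_prop]
  constructor
  · rintro ⟨hx, hr⟩
    obtain ⟨i, hi⟩ := mem_iUnion.1 (hU ▸ hx)
    exact ⟨i, sum_indicator_apply_of_mem hE c hi ▸ hr, hi⟩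
  · rintro ⟨i, hr, hi⟩
    exact ⟨hU ▸ mem_iUnion_of_mem i hi, (sum_indicator_apply_of_mem hE c hi).symm ▸ hr⟩

theorem measure_sep_le_sum_indicator [MeasurableSpace α] (μ : Measure α)
    (hE_meas : ∀ i, MeasurableSet (E i)) (hE : Pairwise (Function.onFun Disjoint E))
    (hU : ⋃ i, E i = Ω) (c : ι → ℝ) (r : ℝ) :
    μ {x ∈ Ω | r ≤ ∑ i, (E i).indicator (fun _ ↦ c i) x} =
      ∑ i ∈ Finset.univ.filter (r ≤ c ·), μ (E i) := by
  rw [sep_le_sum_indicator hE hU, measure_biUnion_finset (hE.set_pairwise _) fun i _ ↦ hE_meas i]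

theorem le_of_sum_indicator_lt [LinearOrder ι] (hE : Pairwise (Function.onFun Disjoint E))
    (hU : ⋃ i, E i = Ω) {c : ι → ℝ} (hc : StrictMono c) {f : α → ℝ}
    (hf : ∀ i j, i < j → ∀ y ∈ E i, ∀ x ∈ E j, f y ≤ f x) {x y : α} (hx : x ∈ Ω) (hy : y ∈ Ω)
    (hxy : ∑ i, (E i).indicator (fun _ ↦ c i) y < ∑ i, (E i).indicator (fun _ ↦ c i) x) :
    f y ≤ f x := by
  obtain ⟨j, hj⟩ := mem_iUnion.1 (hU ▸ hx)
  obtain ⟨i, hi⟩ := mem_iUnion.1 (hU ▸ hy)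
  rw [sum_indicator_apply_of_mem hE c hi, sum_indicator_apply_of_mem hE c hj] at hxy
  exact hf i j (hc.lt_iff_lt.1 hxy) y hi x hj

end StepFunction

section Rearrangement

variable {α : Type*} [MeasurableSpace α] {μ : Measure α}

theorem setLIntegral_le_of_measure_eq {A B : Set α} {g : α → ℝ≥0∞} (hA : MeasurableSet A)
    (hB : MeasurableSet B) (hAB : μ A = μ B) (hA_fin : μ A ≠ ∞)
    (hg : ∀ y ∈ A \ B, ∀ x ∈ B \ A, g y ≤ g x) :
    ∫⁻ x in A, g x ∂μ ≤ ∫⁻ x in B, g x ∂μ := by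
  set t := ⨅ x ∈ B \ A, g x
  have hdiff : μ (A \ B) = μ (B \ A) := measure_sdiff_symm hA.nullMeasurableSet
    hB.nullMeasurableSet hAB (measure_ne_top_of_subset inter_subset_left hA_fin)
  calc ∫⁻ x in A, g x ∂μ = ∫⁻ x in A ∩ B, g x ∂μ + ∫⁻ x in A \ B, g x ∂μ :=
        (lintegral_inter_add_sdiff _ _ hB).symm
    _ ≤ ∫⁻ x in A ∩ B, g x ∂μ + ∫⁻ _ in A \ B, t ∂μ :=
        add_le_add_right (setLIntegral_mono' (hA.diff hB) fun y hy ↦ le_iInf₂ (hg y hy)) _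
    _ = ∫⁻ x in B ∩ A, g x ∂μ + ∫⁻ _ in B \ A, t ∂μ := by
        rw [inter_comm, setLIntegral_const, setLIntegral_const, hdiff]
    _ ≤ ∫⁻ x in B ∩ A, g x ∂μ + ∫⁻ x in B \ A, g x ∂μ :=
        add_le_add_right (setLIntegral_mono' (hB.diff hA) fun x hx ↦ biInf_le g hx) _
    _ = ∫⁻ x in B, g x ∂μ := lintegral_inter_add_sdiff _ _ hA

theorem lintegral_ofReal_le_of_measure_le {ρ₀ ρ₁ : α → ℝ} (hρ₀ : AEMeasurable ρ₀ μ)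
    (hρ₁ : AEMeasurable ρ₁ μ) (hρ₀_nonneg : 0 ≤ᵐ[μ] ρ₀) (hρ₁_nonneg : 0 ≤ᵐ[μ] ρ₁)
    (h : ∀ t, μ {x | t ≤ ρ₀ x} ≤ μ {x | t ≤ ρ₁ x}) :
    ∫⁻ x, ENNReal.ofReal (ρ₀ x) ∂μ ≤ ∫⁻ x, ENNReal.ofReal (ρ₁ x) ∂μ := by
  rw [lintegral_eq_lintegral_meas_le μ hρ₀_nonneg hρ₀,
    lintegral_eq_lintegral_meas_le μ hρ₁_nonneg hρ₁]
  exact lintegral_mono fun t ↦ h t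

theorem lintegral_ofReal_withDensity {ρ f : α → ℝ} (hρ : Measurable ρ) (hf : Measurable f)
    (hρ_nonneg : 0 ≤ᵐ[μ] ρ) :
    ∫⁻ x, ENNReal.ofReal (ρ x) ∂μ.withDensity (fun x ↦ ENNReal.ofReal (f x)) =
      ∫⁻ x, ENNReal.ofReal (ρ x * f x) ∂μ := by
  rw [lintegral_withDensity_eq_lintegral_mul _ hf.ennreal_ofReal hρ.ennreal_ofReal]
  refine lintegral_congr_ae (hρ_nonneg.mono fun x hx ↦ ?_)
  simp only [Pi.mul_apply, ENNReal.ofReal_mul hx, mul_comm]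

theorem ae_restrict_of_measure_sep_eq {Ω : Set α} (hΩfin : μ Ω ≠ ∞) {p : α → Prop}
    (hp : MeasurableSet {x | p x}) (h : μ {x ∈ Ω | p x} = μ Ω) : ∀ᵐ x ∂μ.restrict Ω, p x := by
  have := isFiniteMeasure_restrict.2 hΩfin
  rw [ae_iff_measure_eq hp.nullMeasurableSet, Measure.restrict_apply hp,
    Measure.restrict_apply_univ, inter_comm]
  exact h

theorem setIntegral_mul_le_of_equimeasurable {Ω : Set α} (hΩ : MeasurableSet Ω)
    (hΩfin : μ Ω ≠ ∞) {ρ₀ ρ₁ f : α → ℝ} (hρ₀ : Measurable ρ₀) (hρ₁ : Measurable ρ₁)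
    (hf : Measurable f) (hρ₁_nonneg : ∀ x ∈ Ω, 0 ≤ ρ₁ x) (hf_nonneg : ∀ x ∈ Ω, 0 ≤ f x)
    (hequi : ∀ r, μ {x ∈ Ω | r ≤ ρ₀ x} = μ {x ∈ Ω | r ≤ ρ₁ x})
    (hord : ∀ x ∈ Ω, ∀ y ∈ Ω, ρ₁ y < ρ₁ x → f y ≤ f x)
    (hint : IntegrableOn (fun x ↦ ρ₁ x * f x) Ω μ) :
    ∫ x in Ω, ρ₀ x * f x ∂μ ≤ ∫ x in Ω, ρ₁ x * f x ∂μ := by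
  set ν := (μ.restrict Ω).withDensity fun x ↦ ENNReal.ofReal (f x)
  have hsep : ∀ {ρ : α → ℝ}, Measurable ρ → ∀ r, MeasurableSet {x ∈ Ω | r ≤ ρ x} :=
    fun hρ r ↦ hΩ.inter (measurableSet_le measurable_const hρ)
  have hf_ae : 0 ≤ᵐ[μ.restrict Ω] f := (ae_restrict_iff' hΩ).2 (ae_of_all _ hf_nonneg)
  have hρ₁_ae : 0 ≤ᵐ[μ.restrict Ω] ρ₁ := (ae_restrict_iff' hΩ).2 (ae_of_all _ hρ₁_nonneg)
  have hρ₀_ae : ∀ᵐ x ∂μ.restrict Ω, 0 ≤ ρ₀ x := by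
    refine ae_restrict_of_measure_sep_eq hΩfin (measurableSet_le measurable_const hρ₀) ?_
    rw [hequi]
    exact (measure_mono fun x hx ↦ hx.1).antisymm
      (measure_mono fun x hx ↦ ⟨hx, hρ₁_nonneg x hx⟩)
  have hν : ∀ {ρ : α → ℝ}, Measurable ρ → ∀ t,
      ν {x | t ≤ ρ x} = ∫⁻ x in {x ∈ Ω | t ≤ ρ x}, ENNReal.ofReal (f x) ∂μ := fun hρ t ↦ by
    rw [withDensity_apply _ (measurableSet_le measurable_const hρ),
      Measure.restrict_restrict (measurableSet_le measurable_const hρ), inter_comm]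
    rfl
  have hlevel : ∀ t, ν {x | t ≤ ρ₀ x} ≤ ν {x | t ≤ ρ₁ x} := fun t ↦ by
    rw [hν hρ₀, hν hρ₁]
    refine setLIntegral_le_of_measure_eq (hsep hρ₀ t) (hsep hρ₁ t) (hequi t)
      (measure_ne_top_of_subset (fun x hx ↦ hx.1) hΩfin) fun y hy x hx ↦ ?_
    have hy₁ : ρ₁ y < t := not_le.1 fun h ↦ hy.2 ⟨hy.1.1, h⟩
    exact ENNReal.ofReal_le_ofReal (hord x hx.1.1 y hy.1.1 (hy₁.trans_le hx.1.2))
  have hν_ae : ∀ {ρ : α → ℝ}, 0 ≤ᵐ[μ.restrict Ω] ρ → 0 ≤ᵐ[ν] ρ :=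
    fun h ↦ (withDensity_absolutelyContinuous _ _).ae_le h
  rw [integral_eq_lintegral_of_nonneg_ae (hρ₀_ae.mp (hf_ae.mono fun x hf hρ ↦ mul_nonneg hρ hf))
      (hρ₀.mul hf).aestronglyMeasurable,
    integral_eq_lintegral_of_nonneg_ae (hρ₁_ae.mp (hf_ae.mono fun x hf hρ ↦ mul_nonneg hρ hf))
      (hρ₁.mul hf).aestronglyMeasurable,
    ← lintegral_ofReal_withDensity hρ₀ hf hρ₀_ae, ← lintegral_ofReal_withDensity hρ₁ hf hρ₁_ae]
  refine ENNReal.toReal_mono ?_ (lintegral_ofReal_le_of_measure_le hρ₀.aemeasurable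
    hρ₁.aemeasurable (hν_ae hρ₀_ae) (hν_ae hρ₁_ae) hlevel)
  rw [lintegral_ofReal_withDensity hρ₁ hf hρ₁_ae]
  exact hint.lintegral_lt_top.ne

end Rearrangement

section Sublevel

variable {α : Type*}

theorem monotone_sep_lt (Ω : Set α) (f : α → ℝ) : Monotone fun t ↦ {x ∈ Ω | f x < t} :=
  fun _ _ hst _ hx ↦ ⟨hx.1, hx.2.trans_le hst⟩

variable [MeasurableSpace α] {μ : Measure α}

theorem tendsto_measure_biUnion_lt {ι : Type*} [LinearOrder ι] [TopologicalSpace ι]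
    [OrderTopology ι] [FirstCountableTopology ι] [DenselyOrdered ι] {s : ι → Set α}
    (hs : Monotone s) (a : ι) :
    Tendsto (μ ∘ s) (𝓝[<] a) (𝓝 (μ (⋃ r < a, s r))) := by
  have : (atTop : Filter (Iio a)).IsCountablyGenerated := by
    rw [← comap_coe_Iio_nhdsLT a]
    infer_instance
  simp_rw [← map_coe_Iio_atTop a, tendsto_map'_iff, ← mem_Iio, biUnion_eq_iUnion]
  exact tendsto_measure_iUnion_atTop fun i j h ↦ hs h

variable {Ω : Set α} {f : α → ℝ}

theorem measure_sep_le_eq_measure_sep_lt {t : ℝ} (hf_level : μ {x ∈ Ω | f x = t} = 0) :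
    μ {x ∈ Ω | f x ≤ t} = μ {x ∈ Ω | f x < t} := by
  refine le_antisymm ?_ (measure_mono fun x hx ↦ ⟨hx.1, hx.2.le⟩)
  calc μ {x ∈ Ω | f x ≤ t}
      ≤ μ ({x ∈ Ω | f x < t} ∪ {x ∈ Ω | f x = t}) :=
        measure_mono fun x hx ↦ hx.2.lt_or_eq.imp (⟨hx.1, ·⟩) (⟨hx.1, ·⟩)
    _ ≤ μ {x ∈ Ω | f x < t} + μ {x ∈ Ω | f x = t} := measure_union_le _ _
    _ = μ {x ∈ Ω | f x < t} := by rw [hf_level, add_zero]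

theorem measurableSet_sep_lt (hΩ : MeasurableSet Ω) (hf : Measurable f) (t : ℝ) :
    MeasurableSet {x ∈ Ω | f x < t} :=
  hΩ.inter (measurableSet_lt hf measurable_const)

variable (hΩ : MeasurableSet Ω) (hΩfin : μ Ω ≠ ∞) (hf : Measurable f)
include hΩ hΩfin hf

theorem continuous_measure_sep_lt (hf_level : ∀ t, μ {x ∈ Ω | f x = t} = 0) :
    Continuous fun t ↦ μ {x ∈ Ω | f x < t} := by
  refine continuous_iff_continuousAt.2 fun t ↦ continuousAt_iff_continuous_left'_right'.2 ⟨?_, ?_⟩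
  · have hU : ⋃ r < t, {x ∈ Ω | f x < r} = {x ∈ Ω | f x < t} := by
      ext x
      simp only [mem_iUnion, mem_ofPred_eq, exists_prop]
      exact ⟨fun ⟨r, hr, hx, hxr⟩ ↦ ⟨hx, hxr.trans hr⟩,
        fun ⟨hx, hxt⟩ ↦ (exists_between hxt).imp fun r hr ↦ ⟨hr.2, hx, hr.1⟩⟩
    have := tendsto_measure_biUnion_lt (μ := μ) (monotone_sep_lt Ω f) t
    rwa [hU] at this
  · have hI : ⋂ r > t, {x ∈ Ω | f x < r} = {x ∈ Ω | f x ≤ t} := by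
      ext x
      simp only [mem_iInter, mem_ofPred_eq]
      refine ⟨fun h ↦ ⟨(h (t + 1) (by linarith)).1, forall_gt_iff_le.mp fun r hr ↦ (h r hr).2⟩,
        fun ⟨hx, hxt⟩ r hr ↦ ⟨hx, hxt.trans_lt hr⟩⟩
    have := tendsto_measure_biInter_gt (μ := μ) (s := fun t ↦ {x ∈ Ω | f x < t}) (a := t)
      (fun r _ ↦ (measurableSet_sep_lt hΩ hf r).nullMeasurableSet)
      (fun i j _ hij ↦ monotone_sep_lt Ω f hij)
      ⟨t + 1, by linarith, measure_ne_top_of_subset (fun x hx ↦ hx.1) hΩfin⟩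
    rwa [hI, measure_sep_le_eq_measure_sep_lt (hf_level t)] at this

theorem exists_measure_sep_lt_eq (hf_level : ∀ t, μ {x ∈ Ω | f x = t} = 0) :
    ∃ T : ℝ≥0∞ → ℝ, ∀ s, 0 < s → s < μ Ω → μ {x ∈ Ω | f x < T s} = s := by
  have hbot : Tendsto (fun t ↦ μ {x ∈ Ω | f x < t}) atBot (𝓝 0) := by
    have hI : ⋂ t, {x ∈ Ω | f x < t} = ∅ :=
      iInter_eq_empty_iff.2 fun x ↦ ⟨f x, fun hx ↦ hx.2.false⟩
    have := tendsto_measure_iInter_atBot (μ := μ)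
      (fun t ↦ (measurableSet_sep_lt hΩ hf t).nullMeasurableSet) (monotone_sep_lt Ω f)
      ⟨0, measure_ne_top_of_subset (fun x hx ↦ hx.1) hΩfin⟩
    rwa [hI, measure_empty] at this
  have htop : Tendsto (fun t ↦ μ {x ∈ Ω | f x < t}) atTop (𝓝 (μ Ω)) := by
    have hU : ⋃ t, {x ∈ Ω | f x < t} = Ω :=
      (iUnion_subset fun _ _ hx ↦ hx.1).antisymm
        fun x hx ↦ mem_iUnion.2 ⟨f x + 1, hx, lt_add_one _⟩
    have := tendsto_measure_iUnion_atTop (μ := μ) (monotone_sep_lt Ω f)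
    rwa [hU] at this
  choose! T hT using fun s (hs : 0 < s ∧ s < μ Ω) ↦ mem_range_of_exists_le_of_exists_ge
    (continuous_measure_sep_lt hΩ hΩfin hf hf_level)
    ((hbot.eventually (eventually_lt_nhds hs.1)).exists.imp fun _ ↦ le_of_lt)
    ((htop.eventually (eventually_gt_nhds hs.2)).exists.imp fun _ ↦ le_of_lt)
  exact ⟨T, fun s h0 hs ↦ hT s ⟨h0, hs⟩⟩

end Sublevel

section SublevelOfMeasure

variable {α : Type*} [MeasurableSpace α] (μ : Measure α) (Ω : Set α) (f : α → ℝ)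
  (T : ℝ≥0∞ → ℝ)

/-- For `0 < s < μ Ω` this is the sublevel set `{x ∈ Ω | f x < T s}`, of measure `s` for `T` as in
`exists_measure_sep_lt_eq`; for `s = 0` it is `∅` and for `s ≥ μ Ω` it is `Ω`. -/
def sublevelOfMeasure (s : ℝ≥0∞) : Set α :=
  {x ∈ Ω | 0 < s ∧ (s < μ Ω → f x < T s)}

variable {μ Ω f T}

theorem sublevelOfMeasure_subset (s : ℝ≥0∞) : sublevelOfMeasure μ Ω f T s ⊆ Ω :=
  fun _ hx ↦ hx.1

@[simp]
theorem sublevelOfMeasure_zero : sublevelOfMeasure μ Ω f T 0 = ∅ := by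
  simp [sublevelOfMeasure]

theorem sublevelOfMeasure_of_le {s : ℝ≥0∞} (hs : 0 < s) (hΩs : μ Ω ≤ s) :
    sublevelOfMeasure μ Ω f T s = Ω :=
  (sublevelOfMeasure_subset s).antisymm fun _ hx ↦ ⟨hx, hs, fun h ↦ absurd hΩs h.not_ge⟩

theorem measurableSet_sublevelOfMeasure (hΩ : MeasurableSet Ω) (hf : Measurable f)
    (s : ℝ≥0∞) : MeasurableSet (sublevelOfMeasure μ Ω f T s) :=
  hΩ.inter (measurable_const.and
    (measurable_const.imp (measurableSet_lt hf measurable_const).mem)).setOf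

theorem lt_of_mem_sublevelOfMeasure {s : ℝ≥0∞} {x y : α} (hy : y ∈ sublevelOfMeasure μ Ω f T s)
    (hx : x ∈ Ω \ sublevelOfMeasure μ Ω f T s) : f y < f x := by
  obtain ⟨-, hs, hyT⟩ := hy
  obtain ⟨hxΩ, hxL⟩ := hx
  simp only [sublevelOfMeasure, mem_ofPred_eq, hxΩ, hs, true_and, Classical.not_imp,
    not_lt] at hxL
  exact (hyT hxL.1).trans_le hxL.2

variable (hT : ∀ s, 0 < s → s < μ Ω → μ {x ∈ Ω | f x < T s} = s)
include hT

theorem monotone_sublevelOfMeasure : Monotone (sublevelOfMeasure μ Ω f T) := by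
  intro s s' hss' x ⟨hxΩ, hs, hxT⟩
  refine ⟨hxΩ, hs.trans_le hss', fun hs' ↦ (hxT (hss'.trans_lt hs')).trans_le ?_⟩
  rcases hss'.eq_or_lt with rfl | hlt
  · exact le_rfl
  have hF : Monotone fun t ↦ μ {x ∈ Ω | f x < t} :=
    fun a b h ↦ measure_mono (monotone_sep_lt Ω f h)
  refine (hF.reflect_lt ?_).le
  rwa [hT s hs (hlt.trans hs'), hT s' (hs.trans hlt) hs']

theorem measure_sublevelOfMeasure {s : ℝ≥0∞} (hsΩ : s ≤ μ Ω) :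
    μ (sublevelOfMeasure μ Ω f T s) = s := by
  rcases eq_zero_or_pos s with rfl | hs
  · simp
  rcases hsΩ.lt_or_eq with hlt | rfl
  · convert hT s hs hlt using 2
    ext x
    simp [sublevelOfMeasure, hs, hlt]
  · rw [sublevelOfMeasure_of_le hs le_rfl]

end SublevelOfMeasure

section SortedPartition

variable {α : Type*}

theorem iUnion_fin_sdiff_succ {A : ℕ → Set α} (hA : Monotone A) (h0 : A 0 = ∅) (n : ℕ) :
    ⋃ i : Fin n, A (i + 1) \ A i = A n := by
  refine (iUnion_subset fun i ↦ sdiff_subset.trans (hA i.isLt)).antisymm fun x hx ↦ ?_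
  obtain ⟨k, hk, hk1⟩ := Nat.exists_not_and_succ_of_not_zero_of_exists (p := (x ∈ A ·))
    (by simp [h0]) ⟨n, hx⟩
  have hkn : k < n := not_le.1 fun hnk ↦ hk (hA hnk hx)
  exact mem_iUnion.2 ⟨⟨k, hkn⟩, hk1, hk⟩

variable [MeasurableSpace α] {μ : Measure α}

theorem measure_iUnion_val_lt_succ {m : ℕ} {D : Fin m → Set α}
    (hD_meas : ∀ i, MeasurableSet (D i)) (hD_disj : Pairwise (Function.onFun Disjoint D))
    (i : Fin m) :
    μ (⋃ (j : Fin m) (_ : (j : ℕ) < i + 1), D j) =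
      μ (⋃ (j : Fin m) (_ : (j : ℕ) < i), D j) + μ (D i) := by
  have hsplit : ⋃ (j : Fin m) (_ : (j : ℕ) < i + 1), D j =
      (⋃ (j : Fin m) (_ : (j : ℕ) < i), D j) ∪ D i := by
    ext x
    simp only [mem_iUnion, mem_union, exists_prop, Nat.lt_succ_iff_lt_or_eq, Fin.val_inj]
    constructor
    · rintro ⟨j, hj | rfl, hx⟩
      exacts [Or.inl ⟨j, hj, hx⟩, Or.inr hx]
    · rintro (⟨j, hj, hx⟩ | hx)
      exacts [⟨j, Or.inl hj, hx⟩, ⟨i, Or.inr rfl, hx⟩]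
  rw [hsplit]
  exact measure_union (disjoint_iUnion₂_left.2 fun j hj ↦ hD_disj (Fin.ne_of_lt hj)) (hD_meas i)

variable {Ω : Set α} {f : α → ℝ}

theorem exists_sorted_partition {m : ℕ} (hΩ : MeasurableSet Ω) (hΩfin : μ Ω ≠ ∞)
    (hf : Measurable f) (hf_level : ∀ t, μ {x ∈ Ω | f x = t} = 0) {D : Fin m → Set α}
    (hD_meas : ∀ i, MeasurableSet (D i)) (hD_disj : Pairwise (Function.onFun Disjoint D))
    (hD_union : ⋃ i, D i = Ω) (hD_pos : ∀ i, μ (D i) ≠ 0) :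
    ∃ Dhat : Fin m → Set α, (∀ i, MeasurableSet (Dhat i)) ∧
      Pairwise (Function.onFun Disjoint Dhat) ∧ (∀ i, μ (Dhat i) = μ (D i)) ∧
      ⋃ i, Dhat i = Ω ∧ ∀ i j, i < j → ∀ y ∈ Dhat i, ∀ x ∈ Dhat j, f y < f x := by
  obtain ⟨T, hT⟩ := exists_measure_sep_lt_eq hΩ hΩfin hf hf_level
  set σ : ℕ → ℝ≥0∞ := fun k ↦ μ (⋃ (j : Fin m) (_ : (j : ℕ) < k), D j)
  have hσ_mono : Monotone σ := fun k l hkl ↦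
    measure_mono (iUnion₂_mono' fun j hj ↦ ⟨j, hj.trans_le hkl, subset_rfl⟩)
  have hσ_le : ∀ k, σ k ≤ μ Ω := fun k ↦
    measure_mono (iUnion₂_subset fun j _ ↦ hD_union ▸ subset_iUnion D j)
  set A : ℕ → Set α := fun k ↦ sublevelOfMeasure μ Ω f T (σ k)
  have hA_mono : Monotone A := (monotone_sublevelOfMeasure hT).comp hσ_mono
  have hA_meas : ∀ k, MeasurableSet (A k) := fun k ↦ measurableSet_sublevelOfMeasure hΩ hf _
  have hA_top : A m = Ω := by
    refine (sublevelOfMeasure_subset _).antisymm fun x hx ↦ ?_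
    obtain ⟨i₀, hx₀⟩ := mem_iUnion.1 (hD_union ▸ hx)
    have hΩpos : 0 < μ Ω := (pos_iff_ne_zero.2 (hD_pos i₀)).trans_le
      (measure_mono (hD_union ▸ subset_iUnion D i₀))
    have hσm : σ m = μ Ω := by simp [σ, hD_union]
    simp only [hσm, sublevelOfMeasure_of_le hΩpos le_rfl, hx]
  refine ⟨fun i ↦ A (i + 1) \ A i, fun i ↦ (hA_meas _).diff (hA_meas _), ?_, fun i ↦ ?_, ?_, ?_⟩
  · refine (pairwise_disjoint_on _).2 fun i j hij ↦ ?_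
    exact disjoint_sdiff_right.mono_left (sdiff_subset.trans (hA_mono hij))
  · have hσ_succ : σ (i + 1) = σ i + μ (D i) := measure_iUnion_val_lt_succ hD_meas hD_disj i
    rw [measure_sdiff (hA_mono (Nat.le_add_right _ 1)) (hA_meas _).nullMeasurableSet
      (measure_ne_top_of_subset (sublevelOfMeasure_subset _) hΩfin),
      measure_sublevelOfMeasure hT (hσ_le _), measure_sublevelOfMeasure hT (hσ_le _), hσ_succ,
      ENNReal.add_sub_cancel_left (ne_top_of_le_ne_top hΩfin (hσ_le _))]
  · rw [iUnion_fin_sdiff_succ hA_mono (by simp [A, σ]), hA_top]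
  · intro i j hij y hy x hx
    exact lt_of_mem_sublevelOfMeasure (hA_mono hij hy.1) ⟨sublevelOfMeasure_subset _ hx.1, hx.2⟩

end SortedPartition

/-- For any `ρ₀` in the rearrangement class `P` generated by a step
function, and any nonnegative `f ∈ L¹(Ω)` whose level sets are null, there is
`ρ₁ ∈ P` with `∫_Ω ρ₀ f ≤ ∫_Ω ρ₁ f`; moreover `ρ₁` can be taken to be a step function
`∑ i, c i • χ_{D̂ i}` on a measurable partition `D̂` of `Ω` with `|D̂ i| = S i`, built from
the sub-level sets of `f` (so that `f` is smaller on `D̂ i` than on `D̂ j` for `i < j`). -/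
theorem stmt13 {N m : ℕ}
    (Ω : Set (EuclideanSpace ℝ (Fin N)))
    (hΩ_meas : MeasurableSet Ω) (hΩ_bd : Bornology.IsBounded Ω)
    (c : Fin m → ℝ) (hc_pos : ∀ i, 0 < c i) (hc_mono : StrictMono c)
    (S : Fin m → ℝ) (hS_pos : ∀ i, 0 < S i)
    (D : Fin m → Set (EuclideanSpace ℝ (Fin N)))
    (hD_meas : ∀ i, MeasurableSet (D i))
    (hD_disj : Pairwise (Function.onFun Disjoint D))
    (hD_union : (⋃ i, D i) = Ω)
    (hD_vol : ∀ i, volume (D i) = ENNReal.ofReal (S i))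
    (ρ₀ : EuclideanSpace ℝ (Fin N) → ℝ) (hρ₀_meas : Measurable ρ₀)
    (hρ₀_mem : ∀ r : ℝ, volume {x ∈ Ω | r ≤ ρ₀ x} =
      volume {x ∈ Ω | r ≤ ∑ i, (D i).indicator (fun _ => c i) x})
    (f : EuclideanSpace ℝ (Fin N) → ℝ) (hf_meas : Measurable f)
    (hf_int : IntegrableOn f Ω) (hf_nonneg : ∀ x ∈ Ω, 0 ≤ f x)
    (hf_level : ∀ a : ℝ, volume {x ∈ Ω | f x = a} = 0) :
    ∃ Dhat : Fin m → Set (EuclideanSpace ℝ (Fin N)),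
      (∀ i, MeasurableSet (Dhat i)) ∧
      Pairwise (Function.onFun Disjoint Dhat) ∧
      (∀ i, volume (Dhat i) = ENNReal.ofReal (S i)) ∧
      (⋃ i, Dhat i) = Ω ∧
      (∀ i j : Fin m, i < j → ∀ y ∈ Dhat i, ∀ x ∈ Dhat j, f y ≤ f x) ∧
      (∀ r : ℝ,
        volume {x ∈ Ω | r ≤ ∑ i, (Dhat i).indicator (fun _ => c i) x} =
          volume {x ∈ Ω | r ≤ ∑ i, (D i).indicator (fun _ => c i) x}) ∧
      (∫ x in Ω, ρ₀ x * f x) ≤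
        ∫ x in Ω, (∑ i, (Dhat i).indicator (fun _ => c i) x) * f x := by
  have hΩfin : volume Ω ≠ ∞ := hΩ_bd.measure_lt_top.ne
  obtain ⟨Dhat, hmeas, hdisj, hvol, hunion, hsorted⟩ := exists_sorted_partition hΩ_meas hΩfin
    hf_meas hf_level hD_meas hD_disj hD_union fun i ↦ by simp [hD_vol, hS_pos i]
  have hord : ∀ i j, i < j → ∀ y ∈ Dhat i, ∀ x ∈ Dhat j, f y ≤ f x :=
    fun i j hij y hy x hx ↦ (hsorted i j hij y hy x hx).le
  have hdist : ∀ r : ℝ, volume {x ∈ Ω | r ≤ ∑ i, (Dhat i).indicator (fun _ => c i) x} =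
      volume {x ∈ Ω | r ≤ ∑ i, (D i).indicator (fun _ => c i) x} := fun r ↦ by
    simp only [measure_sep_le_sum_indicator _ hmeas hdisj hunion,
      measure_sep_le_sum_indicator _ hD_meas hD_disj hD_union, hvol]
  refine ⟨Dhat, hmeas, hdisj, fun i ↦ (hvol i).trans (hD_vol i), hunion, hord, hdist, ?_⟩
  have hρ₁_meas : Measurable fun x ↦ ∑ i, (Dhat i).indicator (fun _ => c i) x :=
    Finset.measurable_sum _ fun i _ ↦ measurable_const.indicator (hmeas i)
  refine setIntegral_mul_le_of_equimeasurable hΩ_meas hΩfin hρ₀_meas hρ₁_meas hf_meas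
    (fun x _ ↦ Finset.sum_nonneg fun i _ ↦ indicator_nonneg (fun _ _ ↦ (hc_pos i).le) x)
    hf_nonneg (fun r ↦ (hρ₀_mem r).trans (hdist r).symm)
    (fun x hx y hy ↦ le_of_sum_indicator_lt hdisj hunion hc_mono hord hx hy) ?_
  refine hf_int.bdd_mul (c := ∑ i, ‖c i‖) hρ₁_meas.aestronglyMeasurable (ae_of_all _ fun x ↦ ?_)
  exact (norm_sum_le _ _).trans (Finset.sum_le_sum fun i _ ↦ norm_indicator_le_norm_self _ _)
end
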